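/- arXiv:1407.0288 — 3 statements merged into one kernel-verified Lean document; each statement's English description precedes it below -/
import Mathlib

section
/- Let 0 < μ < 1/4, β₋ = 1/2 - √(1/4-μ), 0 < p < 1, and ε with 1 - 2β₋ < ε < 1. Define φ(s) = M s^{β₋}(ρ^ε - s^ε) for M, ρ > 0 and s ∈ (0, ρ]. Then φ''(s) = -μ φ(s)/s² - M ε(2β₋ + ε - 1) s^{β₋+ε-2}, and in particular φ''(s) + μφ(s)/s² < 0 for all s ∈ (0, ρ). -/
theorem stmt_16 (μ : ℝ) (hμ0 : 0 < μ) (hμ : μ < 1/4)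
    (βm : ℝ) (hβm : βm = 1/2 - Real.sqrt (1/4 - μ))
    (p : ℝ) (hp : 0 < p) (hp1 : p < 1)
    (ε : ℝ) (hεl : 1 - 2 * βm < ε) (hεu : ε < 1)
    (M ρ : ℝ) (hM : 0 < M) (hρ : 0 < ρ)
    (φ : ℝ → ℝ) (hφ : φ = fun s => M * s ^ βm * (ρ ^ ε - s ^ ε)) :
    ∀ s ∈ Set.Ioo (0:ℝ) ρ,
      deriv (deriv φ) s
        = -μ * φ s / s ^ 2 - M * ε * (2 * βm + ε - 1) * s ^ (βm + ε - 2) ∧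
      deriv (deriv φ) s + μ * φ s / s ^ 2 < 0 := by
  -- basic facts
  have hsq : Real.sqrt (1/4 - μ) ^ 2 = 1/4 - μ := Real.sq_sqrt (by linarith)
  have hβμ : βm * (βm - 1) = -μ := by rw [hβm]; nlinarith [hsq]
  have hβ1 : 1 - 2 * βm > 0 := by
    have : 0 < Real.sqrt (1/4 - μ) := Real.sqrt_pos.mpr (by linarith)
    rw [hβm]; linarith
  have hε0 : 0 < ε := lt_trans hβ1 hεl
  -- auxiliary functions
  set g : ℝ → ℝ := fun s => M * ρ ^ ε * (βm * s ^ (βm - 1)) - M * ((βm + ε) * s ^ (βm + ε - 1)) with hg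
  -- φ has derivative g on Ioi 0
  have hder1 : ∀ s : ℝ, 0 < s → HasDerivAt φ (g s) s := by
    intro s hs
    have h1 : HasDerivAt (fun x : ℝ => x ^ βm) (βm * s ^ (βm - 1)) s :=
      Real.hasDerivAt_rpow_const (Or.inl hs.ne')
    have h2 : HasDerivAt (fun x : ℝ => x ^ (βm + ε)) ((βm + ε) * s ^ (βm + ε - 1)) s :=
      Real.hasDerivAt_rpow_const (Or.inl hs.ne')
    have h : HasDerivAt (fun x : ℝ => M * ρ ^ ε * x ^ βm - M * x ^ (βm + ε)) (g s) s :=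
      ((h1.const_mul (M * ρ ^ ε)).sub (h2.const_mul M))
    refine h.congr_of_eventuallyEq ?_
    filter_upwards [isOpen_Ioi.mem_nhds hs] with x hx
    have hx0 : (0:ℝ) < x := hx
    rw [hφ]
    simp only
    rw [Real.rpow_add hx0]
    ring
  have hderφ : ∀ s : ℝ, 0 < s → deriv φ s = g s := fun s hs => (hder1 s hs).deriv
  -- second derivative
  intro s hs
  obtain ⟨hs0, hsρ⟩ := hs
  have hgder : HasDerivAt g
      (M * ρ ^ ε * (βm * ((βm - 1) * s ^ (βm - 1 - 1)))
        - M * ((βm + ε) * ((βm + ε - 1) * s ^ (βm + ε - 1 - 1)))) s := by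
    have h1 : HasDerivAt (fun x : ℝ => x ^ (βm - 1)) ((βm - 1) * s ^ (βm - 1 - 1)) s :=
      Real.hasDerivAt_rpow_const (Or.inl hs0.ne')
    have h2 : HasDerivAt (fun x : ℝ => x ^ (βm + ε - 1)) ((βm + ε - 1) * s ^ (βm + ε - 1 - 1)) s :=
      Real.hasDerivAt_rpow_const (Or.inl hs0.ne')
    exact ((h1.const_mul βm).const_mul (M * ρ ^ ε)).sub ((h2.const_mul (βm + ε)).const_mul M)
  have hderiv2 : deriv (deriv φ) s
      = M * ρ ^ ε * (βm * ((βm - 1) * s ^ (βm - 1 - 1)))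
        - M * ((βm + ε) * ((βm + ε - 1) * s ^ (βm + ε - 1 - 1))) := by
    have heq : deriv φ =ᶠ[nhds s] g := by
      filter_upwards [isOpen_Ioi.mem_nhds hs0] with x hx
      exact hderφ x hx
    rw [Filter.EventuallyEq.deriv_eq heq]
    exact hgder.deriv
  -- algebraic identity
  have hsne : s ≠ 0 := hs0.ne'
  have hspow : (0:ℝ) < s ^ (βm + ε - 2) := Real.rpow_pos_of_pos hs0 _
  have key : deriv (deriv φ) s
      = -μ * φ s / s ^ 2 - M * ε * (2 * βm + ε - 1) * s ^ (βm + ε - 2) := by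
    rw [hderiv2, hφ]
    simp only
    have e1 : s ^ (βm - 1 - 1) = s ^ βm / s ^ 2 := by
      rw [show βm - 1 - 1 = βm - (2:ℝ) by ring, Real.rpow_sub hs0, Real.rpow_two]
    have e2 : s ^ (βm + ε - 1 - 1) = s ^ βm * s ^ ε / s ^ 2 := by
      rw [show βm + ε - 1 - 1 = (βm + ε) - (2:ℝ) by ring, Real.rpow_sub hs0,
        Real.rpow_add hs0, Real.rpow_two]
    have e3 : s ^ (βm + ε - 2) = s ^ βm * s ^ ε / s ^ 2 := by
      rw [show βm + ε - 2 = (βm + ε) - (2:ℝ) by ring, Real.rpow_sub hs0,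
        Real.rpow_add hs0, Real.rpow_two]
    rw [e1, e2, e3]
    have hs2 : (s:ℝ) ^ 2 ≠ 0 := pow_ne_zero 2 hsne
    have hμeq : μ = -(βm * (βm - 1)) := by linarith
    rw [hμeq]
    field_simp
    ring
  refine ⟨key, ?_⟩
  rw [key]
  have hpos : 0 < M * ε * (2 * βm + ε - 1) * s ^ (βm + ε - 2) := by
    apply mul_pos (mul_pos (mul_pos hM hε0) (by linarith)) hspow
  have hcancel : -μ * φ s / s ^ 2 + μ * φ s / s ^ 2 = 0 := by ring
  linarith
end

section
/- Let 0 < p < 1, μ ∈ (-2(p+1)/(1-p)², 0), N ≥ 1, r₀ > 0, and δ₀ > 0. Then there exists C₀ > 0 such that for every ε ∈ (0, δ₀) and every C ∈ (0, C₀], the function z_ε(δ) = C(δ-ε)^{2/(1-p)} for δ ∈ (ε, δ₀] satisfies z_ε'' + ((N-1)/(r₀+δ)) z_ε' + (μ/δ²) z_ε < z_ε^p on (ε, δ₀], i.e. z_ε is a strict upper solution; explicitly the inequality holds whenever C^{p-1} > 2(p+1)/(1-p)² + 2(N-1)δ₀/((1-p)r₀). -/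
lemma aux_d1 (C α ε : ℝ) {δ : ℝ} (h : ε < δ) :
    HasDerivAt (fun t => C * (t - ε) ^ α) (C * (α * (δ - ε) ^ (α - 1))) δ := by
  have h1 : HasDerivAt (fun t : ℝ => t - ε) 1 δ := (hasDerivAt_id δ).sub_const ε
  have h2 := h1.rpow_const (p := α) (Or.inl (by intro hh; nlinarith [sub_pos.mpr h]))
  simpa [mul_comm, mul_assoc] using h2.const_mul C

lemma aux_d2 (C α ε : ℝ) {δ : ℝ} (h : ε < δ) :
    deriv (deriv (fun t => C * (t - ε) ^ α)) δ
      = C * α * ((α - 1) * (δ - ε) ^ (α - 2)) := by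
  have hev : deriv (fun t => C * (t - ε) ^ α) =ᶠ[nhds δ]
      fun t => (C * α) * (t - ε) ^ (α - 1) := by
    filter_upwards [isOpen_Ioi.eventually_mem (show δ ∈ Set.Ioi ε from h)] with t ht
    exact (aux_d1 C α ε ht).deriv.trans (by ring)
  rw [hev.deriv_eq, (aux_d1 (C * α) (α - 1) ε h).deriv]
  rw [show α - 1 - 1 = α - 2 by ring]

lemma core (p : ℝ) (hp : 0 < p) (hp1 : p < 1)
    (μ : ℝ) (hμ : μ < 0)
    (N : ℕ) (hN : 1 ≤ N)
    (r₀ δ₀ : ℝ) (hr₀ : 0 < r₀) (hδ₀ : 0 < δ₀)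
    (C : ℝ) (hC : 0 < C)
    (hCp : C ^ (p - 1) > 2 * (p + 1) / (1 - p) ^ 2 + 2 * ((N:ℝ) - 1) * δ₀ / ((1 - p) * r₀))
    (ε : ℝ) (hε : ε ∈ Set.Ioo (0:ℝ) δ₀) (δ : ℝ) (hδ : δ ∈ Set.Ioc ε δ₀) :
    deriv (deriv (fun t => C * (t - ε) ^ (2 / (1 - p)))) δ
      + (((N:ℝ) - 1) / (r₀ + δ)) * deriv (fun t => C * (t - ε) ^ (2 / (1 - p))) δ
      + (μ / δ ^ 2) * (C * (δ - ε) ^ (2 / (1 - p)))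
      < (C * (δ - ε) ^ (2 / (1 - p))) ^ p := by
  obtain ⟨hε0, hεδ₀⟩ := hε
  obtain ⟨hεδ, hδδ₀⟩ := hδ
  have h1p : (0:ℝ) < 1 - p := by linarith
  set α : ℝ := 2 / (1 - p) with hα
  have hαpos : 0 < α := by positivity
  have hα1p : α * (1 - p) = 2 := by rw [hα]; field_simp
  set s : ℝ := δ - ε with hs
  have hspos : 0 < s := by rw [hs]; linarith
  have hδpos : 0 < δ := lt_trans hε0 hεδ
  have hn : (0:ℝ) ≤ (N:ℝ) - 1 := by
    have : (1:ℝ) ≤ (N:ℝ) := by exact_mod_cast hN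
    linarith
  rw [aux_d2 C α ε hεδ, (aux_d1 C α ε hεδ).deriv, ← hs]
  have hT : 0 < s ^ (α - 2) := Real.rpow_pos_of_pos hspos _
  have e1 : s ^ (α - 1) = s ^ (α - 2) * s := by
    rw [show α - 1 = (α - 2) + 1 by ring, Real.rpow_add hspos, Real.rpow_one]
  have e2 : s ^ α = s ^ (α - 2) * (s * s) := by
    rw [show α = (α - 2) + 1 + 1 by ring, Real.rpow_add hspos, Real.rpow_add hspos,
      Real.rpow_one]
    ring
  have eR : (C * s ^ α) ^ p = C ^ p * s ^ (α - 2) := by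
    rw [Real.mul_rpow hC.le (Real.rpow_pos_of_pos hspos _).le,
      ← Real.rpow_mul hspos.le, show α * p = α - 2 by nlinarith]
  rw [eR, e1, e2]
  have hμterm : (μ / δ ^ 2) * (C * (s ^ (α - 2) * (s * s))) < 0 := by
    apply mul_neg_of_neg_of_pos
    · exact div_neg_of_neg_of_pos hμ (by positivity)
    · positivity
  have hrect : ((N:ℝ) - 1) / (r₀ + δ) * s ≤ ((N:ℝ) - 1) * δ₀ / r₀ := by
    have h1 : s / (r₀ + δ) ≤ δ₀ / r₀ :=
      div_le_div₀ hδ₀.le (by rw [hs]; linarith) hr₀ (by linarith)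
    calc ((N:ℝ) - 1) / (r₀ + δ) * s = ((N:ℝ) - 1) * (s / (r₀ + δ)) := by ring
      _ ≤ ((N:ℝ) - 1) * (δ₀ / r₀) := by
          exact mul_le_mul_of_nonneg_left h1 hn
      _ = ((N:ℝ) - 1) * δ₀ / r₀ := by ring
  have eC : C ^ p = C * C ^ (p - 1) := by
    have h := Real.rpow_add hC 1 (p - 1)
    rw [Real.rpow_one, show (1:ℝ) + (p - 1) = p by ring] at h
    exact h
  have key : C * α * (α - 1) + ((N:ℝ) - 1) / (r₀ + δ) * (C * α) * s < C ^ p := by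
    rw [eC]
    have hKa : α * (α - 1) = 2 * (p + 1) / (1 - p) ^ 2 := by
      rw [hα]; field_simp; ring
    have hKb : α * (((N:ℝ) - 1) * δ₀ / r₀) = 2 * ((N:ℝ) - 1) * δ₀ / ((1 - p) * r₀) := by
      rw [hα]; field_simp
    have h2 : α * (α - 1) + ((N:ℝ) - 1) / (r₀ + δ) * α * s < C ^ (p - 1) := by
      have : ((N:ℝ) - 1) / (r₀ + δ) * α * s ≤ α * (((N:ℝ) - 1) * δ₀ / r₀) := by
        calc ((N:ℝ) - 1) / (r₀ + δ) * α * s = α * (((N:ℝ) - 1) / (r₀ + δ) * s) := by ring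
          _ ≤ α * (((N:ℝ) - 1) * δ₀ / r₀) := mul_le_mul_of_nonneg_left hrect hαpos.le
      rw [hKb] at this
      rw [hKa]
      linarith [hCp]
    calc C * α * (α - 1) + (↑N - 1) / (r₀ + δ) * (C * α) * s
        = C * (α * (α - 1) + (↑N - 1) / (r₀ + δ) * α * s) := by ring
      _ < C * C ^ (p - 1) := mul_lt_mul_of_pos_left h2 hC
  calc C * α * ((α - 1) * s ^ (α - 2)) + (↑N - 1) / (r₀ + δ) * (C * (α * (s ^ (α - 2) * s)))
        + μ / δ ^ 2 * (C * (s ^ (α - 2) * (s * s)))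
      = (C * α * (α - 1) + (↑N - 1) / (r₀ + δ) * (C * α) * s) * s ^ (α - 2)
        + μ / δ ^ 2 * (C * (s ^ (α - 2) * (s * s))) := by ring
    _ < C ^ p * s ^ (α - 2) + 0 :=
        add_lt_add_of_lt_of_lt (mul_lt_mul_of_pos_right key hT) hμterm
    _ = C ^ p * s ^ (α - 2) := add_zero _

theorem stmt_18 (p : ℝ) (hp : 0 < p) (hp1 : p < 1)
    (μ : ℝ) (hμl : -(2 * (p + 1) / (1 - p) ^ 2) < μ) (hμ : μ < 0)
    (N : ℕ) (hN : 1 ≤ N)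
    (r₀ δ₀ : ℝ) (hr₀ : 0 < r₀) (hδ₀ : 0 < δ₀) :
    (∃ C₀ > (0:ℝ), ∀ ε ∈ Set.Ioo (0:ℝ) δ₀, ∀ C ∈ Set.Ioc (0:ℝ) C₀,
      ∀ δ ∈ Set.Ioc ε δ₀,
        deriv (deriv (fun t => C * (t - ε) ^ (2 / (1 - p)))) δ
          + (((N:ℝ) - 1) / (r₀ + δ)) *
              deriv (fun t => C * (t - ε) ^ (2 / (1 - p))) δ
          + (μ / δ ^ 2) * (C * (δ - ε) ^ (2 / (1 - p)))
          < (C * (δ - ε) ^ (2 / (1 - p))) ^ p) ∧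
    (∀ C > (0:ℝ),
      C ^ (p - 1) > 2 * (p + 1) / (1 - p) ^ 2 + 2 * ((N:ℝ) - 1) * δ₀ / ((1 - p) * r₀) →
      ∀ ε ∈ Set.Ioo (0:ℝ) δ₀, ∀ δ ∈ Set.Ioc ε δ₀,
        deriv (deriv (fun t => C * (t - ε) ^ (2 / (1 - p)))) δ
          + (((N:ℝ) - 1) / (r₀ + δ)) *
              deriv (fun t => C * (t - ε) ^ (2 / (1 - p))) δ
          + (μ / δ ^ 2) * (C * (δ - ε) ^ (2 / (1 - p)))
          < (C * (δ - ε) ^ (2 / (1 - p))) ^ p) := by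
  have h1p : (0:ℝ) < 1 - p := by linarith
  have hn : (0:ℝ) ≤ (N:ℝ) - 1 := by
    have : (1:ℝ) ≤ (N:ℝ) := by exact_mod_cast hN
    linarith
  obtain ⟨K, hKdef⟩ : ∃ K : ℝ, K = 2 * (p + 1) / (1 - p) ^ 2
      + 2 * ((N:ℝ) - 1) * δ₀ / ((1 - p) * r₀) := ⟨_, rfl⟩
  have hK1 : (0:ℝ) < K + 1 := by
    have ha : (0:ℝ) < 2 * (p + 1) / (1 - p) ^ 2 := by positivity
    have hb : (0:ℝ) ≤ 2 * ((N:ℝ) - 1) * δ₀ / ((1 - p) * r₀) := by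
      apply div_nonneg _ (by positivity)
      nlinarith
    rw [hKdef]; linarith
  constructor
  · refine ⟨(K + 1) ^ (1 / (p - 1)), Real.rpow_pos_of_pos hK1 _, ?_⟩
    intro ε hε C hC δ hδ
    refine core p hp hp1 μ hμ N hN r₀ δ₀ hr₀ hδ₀ C hC.1 ?_ ε hε δ hδ
    rw [← hKdef]
    have h1 : ((K + 1) ^ (1 / (p - 1))) ^ (p - 1) ≤ C ^ (p - 1) :=
      Real.rpow_le_rpow_of_nonpos hC.1 hC.2 (by linarith)
    have h2 : ((K + 1) ^ (1 / (p - 1))) ^ (p - 1) = K + 1 := by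
      rw [← Real.rpow_mul hK1.le, one_div_mul_cancel (by intro h; nlinarith : p - 1 ≠ 0),
        Real.rpow_one]
    rw [h2] at h1
    linarith
  · intro C hC hCp ε hε δ hδ
    exact core p hp hp1 μ hμ N hN r₀ δ₀ hr₀ hδ₀ C hC hCp ε hε δ hδ
end

section
/- Let β < 0 and σ(δ) = δ^{2β}(R-δ)^{N-1} with 0 < δ < δ₀ < R, N ≥ 1. Suppose v: (0, δ₀] → ℝ is bounded with |v| ≤ V, and v satisfies σ(δ)v'(δ) - σ(ε)v'(ε) = ∫_ε^δ σ(s)(v(s)^p s^{β(p-1)} + β(N-1)v(s)/((R-s)s)) ds for all 0 < ε < δ ≤ δ₀, where 0 < p < 1 and v > 0. Then |v'(ε)| ≤ c₁ ε^{-2β} + c₂ V^p ε^{1-β(1-p)} + c₃ V for constants c₁, c₂, c₃ independent of ε; in particular, since β < 0, v' is bounded on (0, δ₀] and lim_{δ→0} v(δ) exists and is finite. -/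
/-!
Integrating the equation from `ε` to `δ₀` gives `σ(ε) v'(ε) = σ(δ₀) v'(δ₀) - ∫_ε^δ₀ f`. Since
`0 < v ≤ V` and `R - s ≥ R - δ₀`, the integrand satisfies `|f s| ≤ K s^(2β-1)`, hence
`|∫_ε^δ₀ f| ≤ K ε^(2β) / (-2β)`, and dividing by `σ(ε) ≥ (R - δ₀)^(N-1) ε^(2β)` yields
`|v'(ε)| ≤ c₁ ε^(-2β) + C`, where `C = (C / V) V` since `V ≥ v(δ₀) > 0`. As `-2β > 0`, `v'` is
bounded on `(0, δ₀]`, so `v` is Lipschitz there and extends continuously to `0`.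
-/

open Set Filter Topology Real

theorem integral_rpow_sub_one_le_of_neg {a ε δ : ℝ} (ha : a < 0) (hε : 0 < ε) (hεδ : ε ≤ δ) :
    ∫ s in ε..δ, s ^ (a - 1) ≤ ε ^ a / -a := by
  have h0 : (0 : ℝ) ∉ uIcc ε δ := by
    rw [uIcc_of_le hεδ]
    exact fun h => h.1.not_gt hε
  rw [integral_rpow (Or.inr ⟨by linarith, h0⟩), sub_add_cancel, ← neg_div_neg_eq, neg_sub]
  have : 0 < δ ^ a := rpow_pos_of_pos (hε.trans_le hεδ) a
  exact div_le_div_of_nonneg_right (by linarith) (by linarith)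

theorem abs_le_of_weighted_flux_eq {w d f : ℝ → ℝ} {a m K ε δ : ℝ} (ha : a < 0) (hm : 0 < m)
    (hK : 0 ≤ K) (hε : 0 < ε) (hεδ : ε ≤ δ) (hw : m * ε ^ a ≤ w ε)
    (hf : ∀ s ∈ Ioc ε δ, |f s| ≤ K * s ^ (a - 1))
    (hflux : w δ * d δ - w ε * d ε = ∫ s in ε..δ, f s) :
    |d ε| ≤ |w δ * d δ| / m * ε ^ (-a) + K / (-a * m) := by
  have hεa : 0 < ε ^ a := rpow_pos_of_pos hε a
  have hintegral : |∫ s in ε..δ, f s| ≤ K * (ε ^ a / -a) := by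
    have hcont : ContinuousOn (fun s => K * s ^ (a - 1)) (uIcc ε δ) := by
      rw [uIcc_of_le hεδ]
      exact continuousOn_const.mul
        (continuousOn_id.rpow_const fun s hs => Or.inl (hε.trans_le hs.1).ne')
    calc |∫ s in ε..δ, f s|
        ≤ ∫ s in ε..δ, K * s ^ (a - 1) := by
          simpa only [Real.norm_eq_abs] using
            intervalIntegral.norm_integral_le_of_norm_le (f := f) hεδ
              (MeasureTheory.ae_of_all _ fun s hs => by simpa only [Real.norm_eq_abs] using hf s hs)
              hcont.intervalIntegrable
      _ = K * ∫ s in ε..δ, s ^ (a - 1) := intervalIntegral.integral_const_mul _ _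
      _ ≤ K * (ε ^ a / -a) :=
          mul_le_mul_of_nonneg_left (integral_rpow_sub_one_le_of_neg ha hε hεδ) hK
  have hwε : 0 < w ε := (mul_pos hm hεa).trans_le hw
  have hmain : m * ε ^ a * |d ε| ≤ |w δ * d δ| + K * (ε ^ a / -a) :=
    calc m * ε ^ a * |d ε| ≤ w ε * |d ε| := mul_le_mul_of_nonneg_right hw (abs_nonneg _)
      _ = |w δ * d δ - ∫ s in ε..δ, f s| := by
          rw [← hflux, sub_sub_cancel, abs_mul, abs_of_pos hwε]
      _ ≤ |w δ * d δ| + K * (ε ^ a / -a) := (abs_sub _ _).trans (by gcongr)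
  rw [← le_div_iff₀' (by positivity)] at hmain
  refine hmain.trans_eq ?_
  rw [rpow_neg hε.le]
  field_simp

theorem rpow_mul_source_eq {s : ℝ} (hs : 0 < s) (β p c v R : ℝ) :
    s ^ (2 * β) * (v ^ p * s ^ (β * (p - 1)) + c * v / ((R - s) * s))
      = s ^ (2 * β - 1) * (v ^ p * s ^ (1 - β * (1 - p)) + c * v / (R - s)) := by
  have h₁ : s ^ (2 * β) = s ^ (2 * β - 1) * s := by
    rw [← rpow_add_one hs.ne']; ring_nf
  have h₂ : s ^ (1 - β * (1 - p)) = s ^ (β * (p - 1)) * s := by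
    rw [← rpow_add_one hs.ne']; ring_nf
  rw [h₁, h₂, ← div_div]
  field_simp

theorem abs_source_le {s δ R v V p e c : ℝ} (hs : 0 < s) (hsδ : s ≤ δ) (hδR : δ < R)
    (hv : 0 < v) (hvV : v ≤ V) (hp : 0 ≤ p) (he : 0 ≤ e) :
    |v ^ p * s ^ e + c * v / (R - s)| ≤ V ^ p * δ ^ e + |c| * V / (R - δ) := by
  have hRs : 0 < R - s := by linarith
  have hRδ : 0 < R - δ := by linarith
  have hV : 0 ≤ V := hv.le.trans hvV
  have hVp : 0 ≤ V ^ p := rpow_nonneg hV p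
  refine (abs_add_le _ _).trans (add_le_add ?_ ?_)
  · rw [abs_of_pos (by positivity)]
    gcongr
  · rw [abs_div, abs_mul, abs_of_pos hv, abs_of_pos hRs]
    gcongr

theorem abs_weight_mul_source_le {s δ R v V n β p c : ℝ} (hs : 0 < s) (hsδ : s ≤ δ)
    (hδR : δ < R) (hn : 0 ≤ n) (hv : 0 < v) (hvV : v ≤ V) (hp : 0 ≤ p)
    (he : 0 ≤ 1 - β * (1 - p)) :
    |s ^ (2 * β) * (R - s) ^ n * (v ^ p * s ^ (β * (p - 1)) + c * v / ((R - s) * s))|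
      ≤ R ^ n * (V ^ p * δ ^ (1 - β * (1 - p)) + |c| * V / (R - δ)) * s ^ (2 * β - 1) := by
  have hRs : 0 < R - s := by linarith
  rw [mul_comm (s ^ (2 * β)), mul_assoc, rpow_mul_source_eq hs, abs_mul, abs_mul,
    abs_of_pos (rpow_pos_of_pos hRs n), abs_of_pos (rpow_pos_of_pos hs _)]
  have hsrc := abs_source_le (c := c) hs hsδ hδR hv hvV hp he
  have hRn : (R - s) ^ n ≤ R ^ n := rpow_le_rpow hRs.le (by linarith) hn
  have hR : 0 ≤ R ^ n := rpow_nonneg (by linarith) n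
  calc (R - s) ^ n * (s ^ (2 * β - 1) * |v ^ p * s ^ (1 - β * (1 - p)) + c * v / (R - s)|)
      ≤ R ^ n * (s ^ (2 * β - 1) * (V ^ p * δ ^ (1 - β * (1 - p)) + |c| * V / (R - δ))) := by
        gcongr
    _ = _ := by ring

theorem exists_tendsto_nhdsGT_of_abs_deriv_le {f : ℝ → ℝ} {a b B : ℝ} (hab : a < b)
    (hf : ∀ x ∈ Ioc a b, DifferentiableAt ℝ f x) (hB : ∀ x ∈ Ioc a b, |deriv f x| ≤ B) :
    ∃ l, Tendsto f (𝓝[>] a) (𝓝 l) := by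
  have hlip : LipschitzOnWith B.toNNReal f (Ioc a b) := by
    refine (convex_Ioc a b).lipschitzOnWith_of_nnnorm_deriv_le hf fun x hx => ?_
    rw [← NNReal.coe_le_coe, coe_nnnorm, Real.norm_eq_abs, Real.coe_toNNReal']
    exact (hB x hx).trans (le_max_left _ _)
  obtain ⟨g, hg, hfg⟩ := hlip.extend_real
  refine ⟨g a, ((hg.continuous.tendsto a).mono_left nhdsWithin_le_nhds).congr' ?_⟩
  filter_upwards [Ioc_mem_nhdsGT hab] with x hx using (hfg hx).symm

theorem exists_abs_deriv_le_rpow_add_const {v : ℝ → ℝ} {R δ₀ n β p c V : ℝ} (hδ₀ : 0 < δ₀)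
    (hR : δ₀ < R) (hn : 0 ≤ n) (hβ : β < 0) (hp : 0 ≤ p) (he : 0 ≤ 1 - β * (1 - p))
    (hpos : ∀ δ ∈ Ioc 0 δ₀, 0 < v δ) (hbdd : ∀ δ ∈ Ioc 0 δ₀, v δ ≤ V)
    (hflux : ∀ ε, 0 < ε → ε < δ₀ →
      δ₀ ^ (2 * β) * (R - δ₀) ^ n * deriv v δ₀ - ε ^ (2 * β) * (R - ε) ^ n * deriv v ε
        = ∫ s in ε..δ₀, s ^ (2 * β) * (R - s) ^ n *
            (v s ^ p * s ^ (β * (p - 1)) + c * v s / ((R - s) * s))) :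
    ∃ c₁ C, 0 ≤ c₁ ∧ ∀ ε ∈ Ioc 0 δ₀, |deriv v ε| ≤ c₁ * ε ^ (-(2 * β)) + C := by
  have hm : 0 < (R - δ₀) ^ n := rpow_pos_of_pos (sub_pos.2 hR) n
  have hK : 0 ≤ R ^ n * (V ^ p * δ₀ ^ (1 - β * (1 - p)) + |c| * V / (R - δ₀)) := by
    have : 0 < R - δ₀ := sub_pos.2 hR
    have : 0 < R := hδ₀.trans hR
    have : 0 ≤ V := (hpos δ₀ ⟨hδ₀, le_rfl⟩).le.trans (hbdd δ₀ ⟨hδ₀, le_rfl⟩)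
    positivity
  refine ⟨|δ₀ ^ (2 * β) * (R - δ₀) ^ n * deriv v δ₀| / (R - δ₀) ^ n,
    R ^ n * (V ^ p * δ₀ ^ (1 - β * (1 - p)) + |c| * V / (R - δ₀)) / (-(2 * β) * (R - δ₀) ^ n),
    div_nonneg (abs_nonneg _) hm.le, fun ε ⟨hε, hεδ⟩ => ?_⟩
  refine abs_le_of_weighted_flux_eq (w := fun s => s ^ (2 * β) * (R - s) ^ n)
    (show 2 * β < 0 by linarith) hm hK hε hεδ ?_ (fun s ⟨hεs, hsδ⟩ => ?_)
    (hεδ.lt_or_eq.elim (hflux ε hε) fun hεδ₀ => by simp [hεδ₀])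
  · rw [mul_comm]
    exact mul_le_mul_of_nonneg_left (rpow_le_rpow (by linarith) (by linarith) hn)
      (rpow_nonneg hε.le _)
  · have hs : s ∈ Ioc 0 δ₀ := ⟨hε.trans hεs, hsδ⟩
    exact abs_weight_mul_source_le hs.1 hsδ hR hn (hpos s hs) (hbdd s hs) hp he

theorem stmt_19 (N : ℕ) (hN : 1 ≤ N)
    (R δ₀ : ℝ) (hδ₀ : 0 < δ₀) (hR : δ₀ < R)
    (β : ℝ) (hβ : β < 0)
    (p : ℝ) (hp : 0 < p) (hp1 : p < 1)
    (σ : ℝ → ℝ) (hσ : σ = fun δ => δ ^ (2 * β) * (R - δ) ^ ((N:ℝ) - 1))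
    (v : ℝ → ℝ) (V : ℝ)
    (hpos : ∀ δ ∈ Set.Ioc (0:ℝ) δ₀, 0 < v δ)
    (hbdd : ∀ δ ∈ Set.Ioc (0:ℝ) δ₀, |v δ| ≤ V)
    (hdiff : ∀ δ ∈ Set.Ioc (0:ℝ) δ₀, DifferentiableAt ℝ v δ)
    (hint : ∀ ε δ : ℝ, 0 < ε → ε < δ → δ ≤ δ₀ →
      σ δ * deriv v δ - σ ε * deriv v ε
        = ∫ s in ε..δ,
            σ s * (v s ^ p * s ^ (β * (p - 1))
              + β * ((N:ℝ) - 1) * v s / ((R - s) * s))) :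
    (∃ c₁ c₂ c₃ : ℝ, ∀ ε ∈ Set.Ioc (0:ℝ) δ₀,
        |deriv v ε| ≤ c₁ * ε ^ (-(2 * β)) + c₂ * V ^ p * ε ^ (1 - β * (1 - p)) + c₃ * V) ∧
    (∃ B : ℝ, ∀ ε ∈ Set.Ioc (0:ℝ) δ₀, |deriv v ε| ≤ B) ∧
    (∃ l : ℝ, Filter.Tendsto v (nhdsWithin 0 (Set.Ioi 0)) (nhds l)) := by
  subst hσ
  have hV : 0 < V :=
    (hpos δ₀ ⟨hδ₀, le_rfl⟩).trans_le ((le_abs_self _).trans (hbdd δ₀ ⟨hδ₀, le_rfl⟩))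
  obtain ⟨c₁, C, hc₁, hderiv⟩ := exists_abs_deriv_le_rpow_add_const hδ₀ hR
    (sub_nonneg.2 (by exact_mod_cast hN)) hβ hp.le (by nlinarith) hpos
    (fun δ hδ => (le_abs_self _).trans (hbdd δ hδ)) fun ε hε hlt => hint ε δ₀ hε hlt le_rfl
  have hbound : ∀ ε ∈ Ioc 0 δ₀, |deriv v ε| ≤ c₁ * δ₀ ^ (-(2 * β)) + C := by
    intro ε hε
    have := rpow_le_rpow hε.1.le hε.2 (show 0 ≤ -(2 * β) by linarith)
    refine (hderiv ε hε).trans ?_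
    gcongr
  refine ⟨⟨c₁, 0, C / V, fun ε hε => ?_⟩, ⟨_, hbound⟩,
    exists_tendsto_nhdsGT_of_abs_deriv_le hδ₀ hdiff hbound⟩
  simpa [div_mul_cancel₀ _ hV.ne'] using hderiv ε hε
end
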